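/- arXiv:1810.08865 — 2 statements merged into one kernel-verified Lean document; each statement's English description precedes it below -/
import Mathlib

section
/- Let k ≥ 3. As permutations of the states of k+1 bit lines, the order of the product s_{k,k+1} ∘ C^k is 6. -/
/-!
Write `g = s ∘ C^k`, where `s` swaps the last two bits. If the first `k - 1` bits of a state
are not all equal, `C^k` fixes the state and its image, so `g` acts there as `s` and `g ^ 2`
fixes the state. If they all equal `v`, the state is determined by `v` and its last two bits
`b, c`, and `g` acts on such triples by `(v, b, c) ↦ (!b, c, !v)`, a map of order 3. Hence
`g ^ 6 = 1`. The all-true state is moved by `g ^ 2`, and since `k ≥ 3` there is a state with a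
non-constant prefix and distinct last two bits, which is moved by `g ^ 3 = g`.
-/

/-- The underlying function of the gate `C^k`: flip each of the first `k` bits
precisely when the first `k` bits are all equal (all true or all false). -/
def ckFun (k N : ℕ) (x : Fin N → Bool) : Fin N → Bool :=
  fun j =>
    if (j : ℕ) < k ∧
        ((∀ i : Fin N, (i : ℕ) < k → x i = true) ∨ (∀ i : Fin N, (i : ℕ) < k → x i = false))
      then !(x j) else x j

lemma ckFun_involutive (k N : ℕ) : Function.Involutive (ckFun k N) := by
  intro x
  by_cases h : (∀ i : Fin N, (i : ℕ) < k → x i = true) ∨ (∀ i : Fin N, (i : ℕ) < k → x i = false)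
  · have hx : ∀ j : Fin N, ckFun k N x j = if (j : ℕ) < k then !(x j) else x j := by
      intro j
      by_cases hj : (j : ℕ) < k <;> simp [ckFun, hj, h]
    have h' : (∀ i : Fin N, (i : ℕ) < k → ckFun k N x i = true) ∨
        (∀ i : Fin N, (i : ℕ) < k → ckFun k N x i = false) := by
      rcases h with h | h
      · right; intro i hi; rw [hx]; simp [hi, h i hi]
      · left; intro i hi; rw [hx]; simp [hi, h i hi]
    funext j
    by_cases hj : (j : ℕ) < k
    · rw [ckFun]
      simp only [hj, h', and_true, true_and, if_pos, if_true]
      rw [hx j]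
      simp [hj]
    · rw [ckFun]
      simp only [hj, false_and, if_neg, if_false]
      rw [hx j]
      simp [hj]
  · have hx : ckFun k N x = x := by
      funext j; simp [ckFun, h]
    rw [hx, hx]

/-- The gate `C^k` as a permutation of the states of `N` bit lines. -/
def ckGate (k N : ℕ) : Equiv.Perm (Fin N → Bool) :=
  Function.Involutive.toPerm _ (ckFun_involutive k N)

/-- Swap gate: swaps bits `i` and `j`. -/
def swapGate {N : ℕ} (i j : Fin N) : Equiv.Perm (Fin N → Bool) :=
  (Equiv.swap i j).arrowCongr (Equiv.refl Bool)

lemma orderOf_eq_six {G : Type*} [Monoid G] {x : G} (h6 : x ^ 6 = 1) (h2 : x ^ 2 ≠ 1)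
    (h3 : x ^ 3 ≠ 1) : orderOf x = 6 := by
  refine orderOf_eq_of_pow_and_pow_div_prime (by norm_num) h6 fun p hp hdvd => ?_
  have : p ≤ 6 := Nat.le_of_dvd (by norm_num) hdvd
  interval_cases p <;> first | exact h3 | exact h2 | (exfalso; revert hp hdvd; decide)

section Gates

variable {N : ℕ}

lemma swapGate_apply (i j : Fin N) (x : Fin N → Bool) (l : Fin N) :
    swapGate i j x l = x (Equiv.swap i j l) := rfl

lemma swapGate_swapGate (i j : Fin N) (x : Fin N → Bool) : swapGate i j (swapGate i j x) = x := by
  funext l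
  simp only [swapGate_apply, Equiv.swap_apply_self]

lemma ckFun_eq_self_of_ne {k : ℕ} {x : Fin N → Bool} {i j : Fin N} (hi : (i : ℕ) < k)
    (hj : (j : ℕ) < k) (hne : x i ≠ x j) : ckFun k N x = x := by
  funext l
  rw [ckFun, if_neg]
  rintro ⟨-, h | h⟩ <;> exact hne ((h i hi).trans (h j hj).symm)

lemma ckFun_apply_of_forall_eq {k : ℕ} {x : Fin N → Bool} {v : Bool}
    (h : ∀ i : Fin N, (i : ℕ) < k → x i = v) (l : Fin N) :
    ckFun k N x l = if (l : ℕ) < k then !x l else x l := by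
  have hconst : (∀ i : Fin N, (i : ℕ) < k → x i = true) ∨
      (∀ i : Fin N, (i : ℕ) < k → x i = false) := by
    cases v
    · exact Or.inr h
    · exact Or.inl h
  by_cases hl : (l : ℕ) < k <;> simp [ckFun, hl, hconst]

end Gates

def swapCk (k : ℕ) : Equiv.Perm (Fin (k + 1) → Bool) :=
  swapGate (⟨k - 1, by omega⟩ : Fin (k + 1)) (Fin.last k) * ckGate k (k + 1)

section SwapCk

variable {k : ℕ}

lemma swapCk_apply (x : Fin (k + 1) → Bool) :
    swapCk k x = swapGate (⟨k - 1, by omega⟩ : Fin (k + 1)) (Fin.last k) (ckFun k (k + 1) x) :=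
  rfl

lemma swap_last_apply_of_lt {j : Fin (k + 1)} (hj : (j : ℕ) < k - 1) :
    Equiv.swap (⟨k - 1, by omega⟩ : Fin (k + 1)) (Fin.last k) j = j := by
  apply Equiv.swap_apply_of_ne_of_ne <;> simp [Fin.ext_iff] <;> omega

lemma swapCk_apply_of_ne {x : Fin (k + 1) → Bool} {i j : Fin (k + 1)} (hi : (i : ℕ) < k)
    (hj : (j : ℕ) < k) (hne : x i ≠ x j) :
    swapCk k x = swapGate (⟨k - 1, by omega⟩ : Fin (k + 1)) (Fin.last k) x := by
  rw [swapCk_apply, ckFun_eq_self_of_ne hi hj hne]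

lemma swapCk_pow_two_apply_of_ne {x : Fin (k + 1) → Bool} {i j : Fin (k + 1)}
    (hi : (i : ℕ) < k - 1) (hj : (j : ℕ) < k - 1) (hne : x i ≠ x j) :
    (swapCk k ^ 2) x = x := by
  have hne' : swapCk k x i ≠ swapCk k x j := by
    rwa [swapCk_apply_of_ne (by omega) (by omega) hne, swapGate_apply, swapGate_apply,
      swap_last_apply_of_lt hi, swap_last_apply_of_lt hj]
  rw [pow_two, Equiv.Perm.mul_apply, swapCk_apply_of_ne (by omega) (by omega) hne',
    swapCk_apply_of_ne (by omega) (by omega) hne, swapGate_swapGate]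

def prefixState (k : ℕ) (v b c : Bool) : Fin (k + 1) → Bool :=
  fun j => if (j : ℕ) < k - 1 then v else if (j : ℕ) = k - 1 then b else c

lemma swapGate_prefixState (hk : 0 < k) (v b c : Bool) :
    swapGate (⟨k - 1, by omega⟩ : Fin (k + 1)) (Fin.last k) (prefixState k v b c) =
      prefixState k v c b := by
  funext j
  rw [swapGate_apply, Equiv.swap_apply_def]
  split_ifs <;> simp only [prefixState, Fin.ext_iff, Fin.val_last] at * <;> split_ifs <;>
    first | rfl | omega

lemma ckFun_prefixState_self (hk : 0 < k) (v c : Bool) :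
    ckFun k (k + 1) (prefixState k v v c) = prefixState k (!v) (!v) c := by
  have hconst : ∀ i : Fin (k + 1), (i : ℕ) < k → prefixState k v v c i = v := by
    intro i hi
    simp only [prefixState]
    split_ifs <;> first | rfl | omega
  funext j
  rw [ckFun_apply_of_forall_eq hconst]
  simp only [prefixState]
  split_ifs <;> first | rfl | omega

lemma swapCk_prefixState (hk : 2 ≤ k) (v b c : Bool) :
    swapCk k (prefixState k v b c) = prefixState k (!b) c (!v) := by
  rw [swapCk_apply]
  by_cases hbv : b = v
  · rw [hbv, ckFun_prefixState_self (by omega), swapGate_prefixState (by omega)]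
  · have hne :
        prefixState k v b c ⟨0, by omega⟩ ≠ prefixState k v b c ⟨k - 1, by omega⟩ := by
      simpa [prefixState, show 0 < k - 1 by omega] using Ne.symm hbv
    rw [ckFun_eq_self_of_ne (by simp; omega) (by simp; omega) hne, swapGate_prefixState (by omega),
      Bool.eq_not_iff.mpr hbv, Bool.not_not]

lemma swapCk_pow_three_prefixState (hk : 2 ≤ k) (v b c : Bool) :
    (swapCk k ^ 3) (prefixState k v b c) = prefixState k v b c := by
  simp only [pow_succ, pow_zero, one_mul, Equiv.Perm.mul_apply, swapCk_prefixState hk,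
    Bool.not_not]

lemma eq_prefixState {x : Fin (k + 1) → Bool} {v : Bool}
    (h : ∀ i : Fin (k + 1), (i : ℕ) < k - 1 → x i = v) :
    x = prefixState k v (x ⟨k - 1, by omega⟩) (x (Fin.last k)) := by
  funext j
  simp only [prefixState]
  split_ifs with hj hj'
  · exact h j hj
  · exact congrArg x (Fin.ext hj')
  · exact congrArg x (Fin.ext (show (j : ℕ) = k by omega))

lemma swapCk_pow_six (hk : 2 ≤ k) : swapCk k ^ 6 = 1 := by
  ext1 x
  by_cases hx : ∃ i j : Fin (k + 1), (i : ℕ) < k - 1 ∧ (j : ℕ) < k - 1 ∧ x i ≠ x j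
  · obtain ⟨i, j, hi, hj, hne⟩ := hx
    rw [show 6 = 2 * 3 from rfl, pow_mul,
      Equiv.Perm.pow_apply_eq_self_of_apply_eq_self (swapCk_pow_two_apply_of_ne hi hj hne)]
    rfl
  · push Not at hx
    have hx3 : (swapCk k ^ 3) x = x := by
      rw [eq_prefixState (v := x ⟨0, by omega⟩)
        fun i hi => hx i ⟨0, by omega⟩ hi (by simp; omega), swapCk_pow_three_prefixState hk]
    rw [show 6 = 3 * 2 from rfl, pow_mul, Equiv.Perm.pow_apply_eq_self_of_apply_eq_self hx3]
    rfl

lemma swapCk_pow_two_ne_one (hk : 2 ≤ k) : swapCk k ^ 2 ≠ 1 := by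
  intro h
  have h0 := congrFun (Equiv.ext_iff.mp h (prefixState k true true true)) ⟨0, by omega⟩
  simp [pow_two, swapCk_prefixState hk, prefixState, show 0 < k - 1 by omega] at h0

lemma swapCk_pow_three_ne_one (hk : 3 ≤ k) : swapCk k ^ 3 ≠ 1 := by
  set x : Fin (k + 1) → Bool := fun j => decide ((j : ℕ) = 0 ∨ (j : ℕ) = k)
  have h0 : ((⟨0, by omega⟩ : Fin (k + 1)) : ℕ) < k - 1 := by simp; omega
  have h1 : ((⟨1, by omega⟩ : Fin (k + 1)) : ℕ) < k - 1 := by simp; omega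
  have hne : x ⟨0, by omega⟩ ≠ x ⟨1, by omega⟩ := by simp [x]; omega
  have hmoved : (swapCk k ^ 3) x ⟨k - 1, by omega⟩ ≠ x ⟨k - 1, by omega⟩ := by
    rw [pow_succ', Equiv.Perm.mul_apply, swapCk_pow_two_apply_of_ne h0 h1 hne,
      swapCk_apply_of_ne (by omega) (by omega) hne, swapGate_apply, Equiv.swap_apply_left]
    simp [x]
    omega
  exact fun h => hmoved (by rw [h]; rfl)

end SwapCk

/-- Let `k ≥ 3`. As permutations of the states of `k+1` bit lines
(bits numbered from 1 informally, from 0 here), the order of the product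
`s_{k,k+1} ∘ C^k` is 6. -/
theorem orderOf_swap_mul_ck (k : ℕ) (hk : 3 ≤ k) :
    orderOf ((swapGate (⟨k - 1, by omega⟩ : Fin (k + 1)) ⟨k, by omega⟩) * ckGate k (k + 1))
      = 6 := by
  exact orderOf_eq_six (swapCk_pow_six (by omega)) (swapCk_pow_two_ne_one (by omega))
    (swapCk_pow_three_ne_one hk)
end

section
/- Let L be a 3-CNF formula with m ≥ 1 clauses over boolean variables x_1, …, x_n (each clause a disjunction of 3 literals). Then there is a list of at most 29·m gates, each of which is a NOT, CNOT, Toffoli, or transposition (swap) of bit lines acting on N = n + 1 + 6m bit lines, whose composite permutation maps, for every assignment x ∈ Bool^n and every a ∈ Bool, the state (x, a, false, …, false) (ancilla bits initialized to false) to the state (x, a XOR L(x), false, …, false), where L(x) ∈ Bool is the truth value of L under the assignment x. -/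
/-- Flip bit `t` of the state `x` precisely when `c x` holds. -/
def condFlipFun {N : ℕ} (c : (Fin N → Bool) → Bool) (t : Fin N)
    (x : Fin N → Bool) : Fin N → Bool :=
  if c x then Function.update x t (!(x t)) else x

lemma condFlipFun_involutive {N : ℕ} (c : (Fin N → Bool) → Bool) (t : Fin N)
    (hc : ∀ x b, c (Function.update x t b) = c x) :
    Function.Involutive (condFlipFun c t) := by
  intro x
  unfold condFlipFun
  by_cases h : c x = true
  · rw [if_pos h, if_pos (by rw [hc]; exact h)]
    simp [Function.update_idem, Function.update_self, Function.update_eq_self]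
  · rw [if_neg h, if_neg h]

/-- NOT gate on bit `i`. -/
def notGate {N : ℕ} (i : Fin N) : Equiv.Perm (Fin N → Bool) :=
  Function.Involutive.toPerm _ (condFlipFun_involutive (fun _ => true) i (fun _ _ => rfl))

/-- CNOT gate: flips bit `j` iff bit `i` is true. -/
def cnotGate {N : ℕ} (i j : Fin N) (h : i ≠ j) : Equiv.Perm (Fin N → Bool) :=
  Function.Involutive.toPerm _ (condFlipFun_involutive (fun x => x i) j
    (fun x b => Function.update_of_ne h b x))

/-- Toffoli gate: flips bit `k` iff bits `i` and `j` are both true. -/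
def tofGate {N : ℕ} (i j k : Fin N) (hik : i ≠ k) (hjk : j ≠ k) :
    Equiv.Perm (Fin N → Bool) :=
  Function.Involutive.toPerm _ (condFlipFun_involutive (fun x => x i && x j) k
    (fun x b => by rw [Function.update_of_ne hik, Function.update_of_ne hjk]))

/-- A gate is basic if it is a NOT, a CNOT, a Toffoli, or a swap of bit lines. -/
def IsBasicGate {N : ℕ} (g : Equiv.Perm (Fin N → Bool)) : Prop :=
  (∃ i, g = notGate i) ∨
  (∃ i j, ∃ h : i ≠ j, g = cnotGate i j h) ∨
  (∃ i j k, ∃ hik : i ≠ k, ∃ hjk : j ≠ k, g = tofGate i j k hik hjk) ∨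
  (∃ i j, g = swapGate i j)

/-- The value of a literal (a variable together with a polarity) under an assignment. -/
def evalLit {n : ℕ} (x : Fin n → Bool) (l : Fin n × Bool) : Bool :=
  if l.2 then x l.1 else !(x l.1)

/-- The value of a clause (a disjunction of three literals) under an assignment. -/
def evalClause {n : ℕ} (x : Fin n → Bool) (C : Fin 3 → Fin n × Bool) : Bool :=
  evalLit x (C 0) || evalLit x (C 1) || evalLit x (C 2)

/-- The truth value of a 3-CNF formula (a conjunction of `m` clauses) under an assignment. -/
def evalCNF {n m : ℕ} (L : Fin m → Fin 3 → Fin n × Bool) (x : Fin n → Bool) : Bool :=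
  decide (∀ j : Fin m, evalClause x (L j) = true)

/-- The state of `n + 1 + 6m` bit lines consisting of the assignment `x`, the target
bit `a`, and `6m` ancilla bits initialized to `false`. -/
def initState (n m : ℕ) (x : Fin n → Bool) (a : Bool) : Fin (n + 1 + 6 * m) → Bool :=
  fun i => if h : (i : ℕ) < n then x ⟨i, h⟩ else if (i : ℕ) = n then a else false

/-!
Each clause gets six ancilla bits: its three negated literals (a CNOT from the variable, then a
NOT if the literal is positive), the conjunction of the first two, the clause value (a Toffoli
and a NOT, by De Morgan), and the conjunction of all clauses so far (a Toffoli with the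
corresponding bit of the previous clause). These at most `10 m` gates leave `L(x)` in the last
ancilla bit; one CNOT copies it onto the target, and since every gate is an involution, running
the computation backwards returns all ancillas to `false`. This uses `20 m + 1 ≤ 29 m` gates.
-/

open Function

section Circuits

variable {α β : Type*}

theorem foldl_reverse_foldl_of_involutive (l : List (Equiv.Perm α))
    (hl : ∀ g ∈ l, Involutive g) (s : α) :
    l.reverse.foldl (fun s g => g s) (l.foldl (fun s g => g s) s) = s := by
  induction l generalizing s with
  | nil => rfl
  | cons g l ih =>
    simp only [List.mem_cons, forall_eq_or_imp] at hl
    simp only [List.reverse_cons, List.foldl_append, List.foldl_cons, List.foldl_nil]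
    rw [ih hl.2, hl.1]

theorem foldl_compute_copy_uncompute (C : List (Equiv.Perm α)) (hC : ∀ g ∈ C, Involutive g)
    (copy : Equiv.Perm α) (enc enc' : β → α) (φ : β → β)
    (hC_enc : ∀ b, C.foldl (fun s g => g s) (enc b) = enc' b)
    (hcopy : ∀ b, copy (enc' b) = enc' (φ b)) (b : β) :
    (C ++ copy :: C.reverse).foldl (fun s g => g s) (enc b) = enc (φ b) := by
  rw [List.foldl_append, List.foldl_cons, hC_enc, hcopy, ← hC_enc,
    foldl_reverse_foldl_of_involutive C hC]

end Circuits

section Gates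

variable {N : ℕ}

theorem notGate_apply (i : Fin N) (s : Fin N → Bool) : notGate i s = update s i (!s i) := by
  simp [notGate, condFlipFun]

theorem cnotGate_apply (i j : Fin N) (h : i ≠ j) (s : Fin N → Bool) :
    cnotGate i j h s = update s j (s j ^^ s i) := by
  cases hi : s i <;> simp [cnotGate, condFlipFun, hi]

theorem tofGate_apply (i j k : Fin N) (hik : i ≠ k) (hjk : j ≠ k) (s : Fin N → Bool) :
    tofGate i j k hik hjk s = update s k (s k ^^ (s i && s j)) := by
  cases hij : s i && s j <;> simp [tofGate, condFlipFun, hij]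

theorem IsBasicGate.involutive {g : Equiv.Perm (Fin N → Bool)} (hg : IsBasicGate g) :
    Involutive g := by
  rcases hg with ⟨i, rfl⟩ | ⟨i, j, h, rfl⟩ | ⟨i, j, k, hik, hjk, rfl⟩ | ⟨i, j, rfl⟩
  · exact Involutive.toPerm_involutive _
  · exact Involutive.toPerm_involutive _
  · exact Involutive.toPerm_involutive _
  · intro s
    ext
    simp [swapGate]

theorem isBasicGate_notGate (i : Fin N) : IsBasicGate (notGate i) :=
  Or.inl ⟨i, rfl⟩

theorem isBasicGate_cnotGate (i j : Fin N) (h : i ≠ j) : IsBasicGate (cnotGate i j h) :=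
  Or.inr <| Or.inl ⟨i, j, h, rfl⟩

theorem isBasicGate_tofGate (i j k : Fin N) (hik : i ≠ k) (hjk : j ≠ k) :
    IsBasicGate (tofGate i j k hik hjk) :=
  Or.inr <| Or.inr <| Or.inl ⟨i, j, k, hik, hjk, rfl⟩

end Gates

section Layout

variable {n m : ℕ}

def wireEquiv (n m : ℕ) : (Fin n ⊕ Fin 1) ⊕ (Fin 6 × Fin m) ≃ Fin (n + 1 + 6 * m) :=
  (Equiv.sumCongr finSumFinEquiv finProdFinEquiv).trans finSumFinEquiv

def varWire (i : Fin n) : Fin (n + 1 + 6 * m) := wireEquiv n m (.inl (.inl i))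

def targetWire : Fin (n + 1 + 6 * m) := wireEquiv n m (.inl (.inr 0))

def ancWire (k : Fin 6) (j : Fin m) : Fin (n + 1 + 6 * m) := wireEquiv n m (.inr (k, j))

@[simp]
theorem varWire_ne_ancWire (i : Fin n) (k : Fin 6) (j : Fin m) :
    varWire (m := m) i ≠ ancWire k j := by
  simp [varWire, ancWire]

@[simp]
theorem ancWire_ne_targetWire (k : Fin 6) (j : Fin m) :
    ancWire k j ≠ targetWire (n := n) := by
  simp [targetWire, ancWire]

@[simp]
theorem ancWire_inj {k k' : Fin 6} {j j' : Fin m} :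
    ancWire (n := n) k j = ancWire k' j' ↔ k = k' ∧ j = j' := by
  simp [ancWire]

def encodeState (x : Fin n → Bool) (a : Bool) (f : Fin 6 × Fin m → Bool) :
    Fin (n + 1 + 6 * m) → Bool :=
  Sum.elim (Sum.elim x fun _ => a) f ∘ (wireEquiv n m).symm

variable (x : Fin n → Bool) (a : Bool) (f : Fin 6 × Fin m → Bool)

@[simp]
theorem encodeState_varWire (i : Fin n) : encodeState x a f (varWire i) = x i := by
  simp [encodeState, varWire]

@[simp]
theorem encodeState_targetWire : encodeState x a f targetWire = a := by
  simp [encodeState, targetWire]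

@[simp]
theorem encodeState_ancWire (k : Fin 6) (j : Fin m) :
    encodeState x a f (ancWire k j) = f (k, j) := by
  simp [encodeState, ancWire]

theorem update_encodeState_ancWire (k : Fin 6) (j : Fin m) (b : Bool) :
    update (encodeState x a f) (ancWire k j) b = encodeState x a (update f (k, j) b) := by
  rw [encodeState, encodeState, ← Sum.update_elim_inr, update_comp_equiv, Equiv.symm_symm,
    ancWire]

theorem update_encodeState_targetWire (b : Bool) :
    update (encodeState x a f) targetWire b = encodeState x b f := by
  have : (fun _ : Fin 1 => b) = update (fun _ => a) 0 b := by
    funext i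
    rw [Subsingleton.elim i 0, update_self]
  rw [encodeState, encodeState, this, ← Sum.update_elim_inr, ← Sum.update_elim_inl,
    update_comp_equiv, Equiv.symm_symm, targetWire]

theorem initState_eq_encodeState : initState n m x a = encodeState x a fun _ => false := by
  funext i
  obtain ⟨w, rfl⟩ := (wireEquiv n m).surjective i
  rcases w with (i | i) | p
  · simp [initState, encodeState, wireEquiv]
  · simp [initState, encodeState, wireEquiv, Subsingleton.elim i 0]
  · simp [initState, encodeState, wireEquiv, show ∀ c, ¬n + 1 + c < n by omega,
      show ∀ c, n + 1 + c ≠ n by omega]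

end Layout

section Oracle

variable {n m : ℕ}

abbrev Gate (N : ℕ) := Equiv.Perm (Fin N → Bool)

def litGates (l : Fin n × Bool) (k : Fin 6) (j : Fin m) : List (Gate (n + 1 + 6 * m)) :=
  cnotGate (varWire l.1) (ancWire k j) (varWire_ne_ancWire _ _ _) ::
    if l.2 then [notGate (ancWire k j)] else []

theorem litGates_foldl (x : Fin n → Bool) (a : Bool) (f : Fin 6 × Fin m → Bool)
    (l : Fin n × Bool) (k : Fin 6) (j : Fin m) :
    (litGates l k j).foldl (fun s g => g s) (encodeState x a f)
      = encodeState x a (update f (k, j) (f (k, j) ^^ !evalLit x l)) := by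
  cases h : l.2 <;>
    simp [litGates, evalLit, h, cnotGate_apply, notGate_apply, update_encodeState_ancWire]

def clauseGates (C : Fin 3 → Fin n × Bool) (j : Fin m) : List (Gate (n + 1 + 6 * m)) :=
  litGates (C 0) 0 j ++ litGates (C 1) 1 j ++ litGates (C 2) 2 j ++
    [tofGate (ancWire 0 j) (ancWire 1 j) (ancWire 3 j) (by simp) (by simp),
      tofGate (ancWire 3 j) (ancWire 2 j) (ancWire 4 j) (by simp) (by simp),
      notGate (ancWire 4 j)]

def prefixGate : Fin m → Gate (n + 1 + 6 * m)
  | ⟨0, h⟩ => cnotGate (ancWire 4 ⟨0, h⟩) (ancWire 5 ⟨0, h⟩) (by simp)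
  | ⟨t + 1, h⟩ => tofGate (ancWire 5 ⟨t, by omega⟩) (ancWire 4 ⟨t + 1, h⟩)
      (ancWire 5 ⟨t + 1, h⟩) (by simp) (by simp)

variable (L : Fin m → Fin 3 → Fin n × Bool)

def stepGates (j : Fin m) : List (Gate (n + 1 + 6 * m)) :=
  clauseGates (L j) j ++ [prefixGate j]

def forwardGates : ℕ → List (Gate (n + 1 + 6 * m))
  | 0 => []
  | t + 1 => forwardGates t ++ if h : t < m then stepGates L ⟨t, h⟩ else []

theorem length_litGates_le (l : Fin n × Bool) (k : Fin 6) (j : Fin m) :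
    (litGates l k j).length ≤ 2 := by
  simp only [litGates, List.length_cons]
  split <;> simp

theorem length_stepGates_le (j : Fin m) : (stepGates L j).length ≤ 10 := by
  have h0 := length_litGates_le (L j 0) 0 j
  have h1 := length_litGates_le (L j 1) 1 j
  have h2 := length_litGates_le (L j 2) 2 j
  simp only [stepGates, clauseGates, List.length_append, List.length_cons, List.length_nil]
  omega

theorem length_forwardGates_le (t : ℕ) : (forwardGates L t).length ≤ 10 * t := by
  induction t with
  | zero => simp [forwardGates]
  | succ t ih =>
    rw [forwardGates, List.length_append]
    split
    · have := length_stepGates_le L ⟨t, ‹_›⟩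
      omega
    · simp only [List.length_nil]
      omega

theorem isBasicGate_of_mem_litGates (l : Fin n × Bool) (k : Fin 6) (j : Fin m) :
    ∀ g ∈ litGates l k j, IsBasicGate g := by
  simp only [litGates, List.mem_cons]
  rintro g (rfl | hg)
  · exact isBasicGate_cnotGate _ _ _
  · split at hg <;> simp only [List.mem_singleton, List.not_mem_nil] at hg
    exact hg ▸ isBasicGate_notGate _

theorem isBasicGate_prefixGate (j : Fin m) : IsBasicGate (prefixGate (n := n) j) := by
  rcases j with ⟨_ | t, h⟩
  · exact isBasicGate_cnotGate _ _ (by simp)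
  · exact isBasicGate_tofGate _ _ _ (by simp) (by simp)

theorem isBasicGate_of_mem_stepGates (j : Fin m) : ∀ g ∈ stepGates L j, IsBasicGate g := by
  intro g hg
  simp only [stepGates, clauseGates, List.mem_append, List.mem_cons, List.not_mem_nil,
    or_false] at hg
  rcases hg with (((hg | hg) | hg) | rfl | rfl | rfl) | rfl
  any_goals exact isBasicGate_of_mem_litGates _ _ _ g hg
  all_goals first
    | exact isBasicGate_tofGate _ _ _ _ _
    | exact isBasicGate_notGate _
    | exact isBasicGate_prefixGate _

theorem isBasicGate_of_mem_forwardGates (t : ℕ) : ∀ g ∈ forwardGates L t, IsBasicGate g := by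
  induction t with
  | zero => simp [forwardGates]
  | succ t ih =>
    intro g hg
    rw [forwardGates, List.mem_append] at hg
    rcases hg with hg | hg
    · exact ih g hg
    · split at hg
      · exact isBasicGate_of_mem_stepGates L _ g hg
      · simp at hg

variable (x : Fin n → Bool)

def prefixSat (t : ℕ) : Bool := decide (∀ j : Fin m, (j : ℕ) < t → evalClause x (L j) = true)

def clauseRegisters (j : Fin m) : Fin 6 → Bool :=
  ![!evalLit x (L j 0), !evalLit x (L j 1), !evalLit x (L j 2),
    !evalLit x (L j 0) && !evalLit x (L j 1), evalClause x (L j), prefixSat L x (j + 1)]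

def ancillaAfter (t : ℕ) : Fin 6 × Fin m → Bool :=
  fun p => if (p.2 : ℕ) < t then clauseRegisters L x p.2 p.1 else false

theorem prefixSat_zero : prefixSat L x 0 = true := by
  simp [prefixSat]

theorem prefixSat_succ (t : ℕ) (h : t < m) :
    prefixSat L x (t + 1) = (prefixSat L x t && evalClause x (L ⟨t, h⟩)) := by
  rw [Bool.eq_iff_iff]
  simp only [prefixSat, Bool.and_eq_true, decide_eq_true_eq]
  constructor
  · intro H
    exact ⟨fun j hj => H j (by omega), H ⟨t, h⟩ (Nat.lt_succ_self t)⟩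
  · rintro ⟨H, Ht⟩ j hj
    rcases Nat.lt_succ_iff_lt_or_eq.1 hj with hj | hj
    · exact H j hj
    · obtain rfl : j = ⟨t, h⟩ := Fin.ext hj
      exact Ht

theorem prefixSat_eq_evalCNF : prefixSat L x m = evalCNF L x := by
  simp [prefixSat, evalCNF]

theorem ancillaAfter_last (h : m - 1 < m) : ancillaAfter L x m (5, ⟨m - 1, h⟩) = evalCNF L x := by
  simp [ancillaAfter, clauseRegisters, h, Nat.sub_add_cancel (Nat.one_le_of_lt h),
    prefixSat_eq_evalCNF]

theorem prefixGate_apply (a : Bool) (f : Fin 6 × Fin m → Bool) (j : Fin m)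
    (hprev : ∀ i : Fin m, (i : ℕ) + 1 = j → f (5, i) = prefixSat L x j)
    (hclause : f (4, j) = evalClause x (L j)) :
    prefixGate j (encodeState x a f)
      = encodeState x a (update f (5, j) (f (5, j) ^^ prefixSat L x (j + 1))) := by
  rcases j with ⟨_ | t, h⟩
  · simp_all [prefixGate, cnotGate_apply, update_encodeState_ancWire, prefixSat_succ,
      prefixSat_zero]
  · simp_all [prefixGate, tofGate_apply, update_encodeState_ancWire, prefixSat_succ L x (t + 1) h]

theorem stepGates_foldl (a : Bool) (t : ℕ) (h : t < m) :
    (stepGates L ⟨t, h⟩).foldl (fun s g => g s) (encodeState x a (ancillaAfter L x t))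
      = encodeState x a (ancillaAfter L x (t + 1)) := by
  simp only [stepGates, clauseGates, List.foldl_append, litGates_foldl, List.foldl_cons,
    List.foldl_nil, tofGate_apply, notGate_apply, encodeState_ancWire, update_encodeState_ancWire]
  rw [prefixGate_apply L x]
  · congr 1
    funext ⟨k, j⟩
    by_cases hj : (j : ℕ) = t
    · obtain rfl : j = ⟨t, h⟩ := Fin.ext hj
      fin_cases k <;> simp [ancillaAfter, clauseRegisters, evalClause]
    · have hj' : j ≠ ⟨t, h⟩ := fun e => hj (congrArg Fin.val e)
      have hlt : (j : ℕ) < t + 1 ↔ (j : ℕ) < t := by omega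
      simp only [ancillaAfter, update_apply, Prod.mk.injEq, hj', and_false, if_false, hlt]
  · intro i hi
    dsimp only at hi
    subst hi
    simp [ancillaAfter, clauseRegisters]
  · simp [ancillaAfter, evalClause]

theorem forwardGates_foldl (a : Bool) (t : ℕ) (ht : t ≤ m) :
    (forwardGates L t).foldl (fun s g => g s) (encodeState x a fun _ => false)
      = encodeState x a (ancillaAfter L x t) := by
  induction t with
  | zero => rfl
  | succ t ih =>
    rw [forwardGates, List.foldl_append, ih (by omega), dif_pos (by omega), stepGates_foldl]

end Oracle

/-- For every 3-CNF formula `L` with `m ≥ 1` clauses over `n` boolean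
variables there is a list of at most `29·m` basic gates (NOT, CNOT, Toffoli, swap) on
`N = n + 1 + 6m` bit lines whose composite (applied left to right) maps, for every
assignment `x` and every `a : Bool`, the state `(x, a, false, …, false)` to the state
`(x, a XOR L(x), false, …, false)`. -/
theorem exists_oracle_circuit (n m : ℕ) (hm : 1 ≤ m) (L : Fin m → Fin 3 → Fin n × Bool) :
    ∃ gates : List (Equiv.Perm (Fin (n + 1 + 6 * m) → Bool)),
      gates.length ≤ 29 * m ∧
      (∀ g ∈ gates, IsBasicGate g) ∧
      ∀ (x : Fin n → Bool) (a : Bool),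
        gates.foldl (fun s g => g s) (initState n m x a)
          = initState n m x (xor a (evalCNF L x)) := by
  have hC := isBasicGate_of_mem_forwardGates L m
  let copy := cnotGate (ancWire (n := n) 5 (⟨m - 1, by omega⟩ : Fin m)) targetWire
    (ancWire_ne_targetWire _ _)
  refine ⟨forwardGates L m ++ copy :: (forwardGates L m).reverse, ?_, ?_, fun x a => ?_⟩
  · have := length_forwardGates_le L m
    simp only [List.length_append, List.length_cons, List.length_reverse]
    omega
  · simpa [or_imp, forall_and] using ⟨hC, isBasicGate_cnotGate _ _ _, hC⟩
  · simp only [initState_eq_encodeState]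
    refine foldl_compute_copy_uncompute _ (fun g hg => (hC g hg).involutive) copy _
      (fun b => encodeState x b (ancillaAfter L x m)) (· ^^ evalCNF L x)
      (fun b => forwardGates_foldl L x b m le_rfl) (fun b => ?_) a
    rw [cnotGate_apply, encodeState_ancWire, encodeState_targetWire,
      update_encodeState_targetWire, ancillaAfter_last]
end
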